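/- arXiv:2406.08103 — 9 statements merged into one kernel-verified Lean document; each statement's English description precedes it below -/
import Mathlib

section
/- For every t ∈ (0,T) the function φ is twice differentiable at t and |φ″(t)| ≤ (5/2) · T² · φ(t)³. (Bound on the second time derivative of the Carleman weight φ, from the paper's estimate (2.301), with explicit constant C = 5/2.) -/
/-!
With `g u = u (T - u)` we have `g' = T - 2u` and `g'' = -2`, so `(a / g)'' = 2a (g'² + g) / g³`.
On `(0, T)` one has `g'² + g = T² - 3g ≤ T²`, and `exp (μ c) ≥ 1` gives `a ≤ a³` for `a = exp (μ c)`.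
-/

theorem hasDerivAt_mul_sub_self (T s : ℝ) :
    HasDerivAt (fun u : ℝ => u * (T - u)) (T - 2 * s) s :=
  ((hasDerivAt_id' s).mul ((hasDerivAt_id' s).const_sub T)).congr_deriv (by ring)

theorem hasDerivAt_div_mul_sub (a T s : ℝ) (hs : s * (T - s) ≠ 0) :
    HasDerivAt (fun u : ℝ => a / (u * (T - u))) (-(a * (T - 2 * s)) / (s * (T - s)) ^ 2) s :=
  ((hasDerivAt_const s a).div (hasDerivAt_mul_sub_self T s) hs).congr_deriv (by ring)

theorem hasDerivAt_deriv_div_mul_sub (a T s : ℝ) (hs : s * (T - s) ≠ 0) :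
    HasDerivAt (deriv fun u : ℝ => a / (u * (T - u)))
      (2 * a * ((T - 2 * s) ^ 2 + s * (T - s)) / (s * (T - s)) ^ 3) s := by
  have hopen : IsOpen {u : ℝ | u * (T - u) ≠ 0} :=
    isOpen_ne_fun (by fun_prop) continuous_const
  have hderiv : (deriv fun u : ℝ => a / (u * (T - u))) =ᶠ[nhds s]
      fun u => -(a * (T - 2 * u)) / (u * (T - u)) ^ 2 := by
    filter_upwards [hopen.mem_nhds hs] with u hu
    exact (hasDerivAt_div_mul_sub a T u hu).deriv
  have hnum : HasDerivAt (fun u : ℝ => -(a * (T - 2 * u))) (2 * a) s :=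
    ((((hasDerivAt_id' s).const_mul 2).const_sub T).const_mul a).neg.congr_deriv (by ring)
  have hquot := hnum.div ((hasDerivAt_mul_sub_self T s).pow 2) (pow_ne_zero 2 hs)
  refine (hquot.congr_of_eventuallyEq hderiv).congr_deriv ?_
  obtain ⟨hs₀, hs₁⟩ := mul_ne_zero_iff.1 hs
  simp only [Pi.pow_apply]
  field_simp
  ring

theorem sq_sub_two_mul_add_mul_sub_le {T t : ℝ} (ht : t ∈ Set.Icc 0 T) :
    (T - 2 * t) ^ 2 + t * (T - t) ≤ T ^ 2 := by
  nlinarith [mul_nonneg ht.1 (sub_nonneg.2 ht.2)]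

theorem abs_deriv_deriv_div_mul_sub_le {a T t : ℝ} (ha : 0 ≤ a) (ht : t ∈ Set.Ioo 0 T) :
    |deriv (deriv fun u : ℝ => a / (u * (T - u))) t| ≤ 2 * a * T ^ 2 / (t * (T - t)) ^ 3 := by
  have hg : 0 < t * (T - t) := mul_pos ht.1 (sub_pos.2 ht.2)
  rw [(hasDerivAt_deriv_div_mul_sub a T t hg.ne').deriv, abs_of_nonneg (by positivity)]
  gcongr
  exact sq_sub_two_mul_add_mul_sub_le (Set.Ioo_subset_Icc_self ht)

theorem carleman_weight_phi_second_deriv_bound_general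
    (T μ c : ℝ) (hμ : 1 ≤ μ) (hc0 : 0 ≤ c)
    (φ : ℝ → ℝ) (hφ : ∀ t, φ t = Real.exp (μ * c) / (t * (T - t))) :
    ∀ t ∈ Set.Ioo (0 : ℝ) T,
      DifferentiableAt ℝ φ t ∧ DifferentiableAt ℝ (deriv φ) t ∧
        |deriv (deriv φ) t| ≤ (5 / 2) * T ^ 2 * (φ t) ^ 3 := by
  obtain rfl : φ = fun t => Real.exp (μ * c) / (t * (T - t)) := funext hφ
  set a := Real.exp (μ * c)
  intro t ht
  have hg : 0 < t * (T - t) := mul_pos ht.1 (sub_pos.2 ht.2)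
  have ha : 1 ≤ a := Real.one_le_exp (mul_nonneg (by linarith) hc0)
  refine ⟨(hasDerivAt_div_mul_sub a T t hg.ne').differentiableAt,
    (hasDerivAt_deriv_div_mul_sub a T t hg.ne').differentiableAt, ?_⟩
  calc |deriv (deriv fun u : ℝ => a / (u * (T - u))) t|
      ≤ 2 * a * T ^ 2 / (t * (T - t)) ^ 3 := abs_deriv_deriv_div_mul_sub_le (by linarith) ht
    _ ≤ 5 / 2 * a ^ 3 * T ^ 2 / (t * (T - t)) ^ 3 := by
        gcongr
        exacts [by norm_num, le_self_pow₀ ha (by norm_num)]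
    _ = 5 / 2 * T ^ 2 * (a / (t * (T - t))) ^ 3 := by rw [div_pow]; ring

/-- The Carleman weight `φ(t) = exp(μ c)/(t (T − t))` is twice differentiable on `(0,T)`
with `|φ″(t)| ≤ (5/2) · T² · φ(t)³` (paper's estimate (2.301) with `C = 5/2`). -/
theorem carleman_weight_phi_second_deriv_bound
    (T μ lam M c : ℝ) (hT : 0 < T) (hμ : 1 ≤ μ) (hlam : 1 ≤ lam)
    (hM : 0 < M) (hc0 : 0 ≤ c) (hcM : c ≤ M)
    (φ : ℝ → ℝ) (hφ : ∀ t, φ t = Real.exp (μ * c) / (t * (T - t))) :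
    ∀ t ∈ Set.Ioo (0 : ℝ) T,
      DifferentiableAt ℝ φ t ∧ DifferentiableAt ℝ (deriv φ) t ∧
        |deriv (deriv φ) t| ≤ (5 / 2) * T ^ 2 * (φ t) ^ 3 :=
  carleman_weight_phi_second_deriv_bound_general T μ c hμ hc0 φ hφ
end

section
/- For every t ∈ (0,T) the function α is twice differentiable at t and |α″(t)| ≤ (5/2) · T² · exp(2 μ M) · φ(t)³. (Bound on the second time derivative of the Carleman weight α, from the paper's estimate (2.301), with explicit constant C = 5/2.) -/
/-!
With `g t = t (T - t)` and `K = exp (μ c) - exp (2 μ M)` we have `α = K / g` and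
`α'' = 2 K (T² - 3 g) / g³`. On `(0, T)`, `0 < g ≤ T² / 4`, so `0 ≤ T² - 3 g ≤ T²`, while
`|K| ≤ exp (2 μ M) ≤ exp (2 μ M) · exp (μ c)³` because `0 ≤ μ c ≤ 2 μ M`.
-/

open Filter Topology

namespace CarlemanWeight

variable (K T : ℝ)

lemma hasDerivAt_mul_sub (s : ℝ) : HasDerivAt (fun s => s * (T - s)) (T - 2 * s) s :=
  ((hasDerivAt_id' s).fun_mul ((hasDerivAt_id' s).const_sub T)).congr_deriv (by ring)

lemma hasDerivAt_div_mul_sub {s : ℝ} (hs : s * (T - s) ≠ 0) :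
    HasDerivAt (fun s => K / (s * (T - s))) (K * (2 * s - T) / (s * (T - s)) ^ 2) s :=
  ((hasDerivAt_const s K).div (hasDerivAt_mul_sub T s) hs).congr_deriv (by field_simp; ring)

lemma deriv_div_mul_sub_eventuallyEq {t : ℝ} (ht : t * (T - t) ≠ 0) :
    deriv (fun s => K / (s * (T - s))) =ᶠ[𝓝 t]
      fun s => K * (2 * s - T) / (s * (T - s)) ^ 2 := by
  have hcont : ContinuousAt (fun s : ℝ => s * (T - s)) t := by fun_prop
  filter_upwards [hcont.eventually_ne ht] with s hs
  exact (hasDerivAt_div_mul_sub K T hs).deriv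

lemma hasDerivAt_deriv_div_mul_sub {t : ℝ} (ht : t * (T - t) ≠ 0) :
    HasDerivAt (deriv fun s => K / (s * (T - s)))
      (2 * K * (T ^ 2 - 3 * (t * (T - t))) / (t * (T - t)) ^ 3) t := by
  have hnum : HasDerivAt (fun s => K * (2 * s - T)) (K * 2) t := by
    simpa using (((hasDerivAt_id t).const_mul (2 : ℝ)).sub_const T).const_mul K
  have hden := (hasDerivAt_mul_sub T t).fun_pow 2
  refine HasDerivAt.congr_of_eventuallyEq ?_ (deriv_div_mul_sub_eventuallyEq K T ht)
  refine (hnum.div hden (pow_ne_zero 2 ht)).congr_deriv ?_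
  push_cast
  field_simp
  ring

lemma abs_second_deriv_div_mul_sub_le {t : ℝ} (ht0 : 0 < t) (htT : t < T) :
    |2 * K * (T ^ 2 - 3 * (t * (T - t))) / (t * (T - t)) ^ 3|
      ≤ 2 * T ^ 2 * |K| / (t * (T - t)) ^ 3 := by
  have hg : 0 < t * (T - t) := mul_pos ht0 (sub_pos.2 htT)
  have hlo : 0 ≤ T ^ 2 - 3 * (t * (T - t)) := by nlinarith [sq_nonneg (T - 2 * t)]
  rw [abs_div, abs_of_pos (pow_pos hg 3), abs_mul, abs_mul, abs_of_nonneg hlo, abs_two]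
  gcongr ?_ / _
  nlinarith [abs_nonneg K]

lemma abs_exp_sub_exp_le {a b : ℝ} (hab : a ≤ b) : |Real.exp a - Real.exp b| ≤ Real.exp b := by
  rw [abs_of_nonpos (sub_nonpos.2 (Real.exp_le_exp.2 hab))]
  linarith [Real.exp_pos a]

end CarlemanWeight

open CarlemanWeight in
theorem carleman_weight_alpha_second_deriv_bound_general
    (T μ M c : ℝ) (hμ : 1 ≤ μ)
    (hc0 : 0 ≤ c) (hcM : c ≤ M)
    (α φ : ℝ → ℝ)
    (hα : ∀ t, α t = (Real.exp (μ * c) - Real.exp (2 * μ * M)) / (t * (T - t)))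
    (hφ : ∀ t, φ t = Real.exp (μ * c) / (t * (T - t))) :
    ∀ t ∈ Set.Ioo (0 : ℝ) T,
      DifferentiableAt ℝ α t ∧ DifferentiableAt ℝ (deriv α) t ∧
        |deriv (deriv α) t| ≤ (5 / 2) * T ^ 2 * Real.exp (2 * μ * M) * (φ t) ^ 3 := by
  rintro t ⟨ht0, htT⟩
  set K := Real.exp (μ * c) - Real.exp (2 * μ * M)
  obtain rfl : α = fun s => K / (s * (T - s)) := funext hα
  have hg : 0 < t * (T - t) := mul_pos ht0 (sub_pos.2 htT)
  have hα'' := hasDerivAt_deriv_div_mul_sub K T hg.ne'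
  refine ⟨(hasDerivAt_div_mul_sub K T hg.ne').differentiableAt, hα''.differentiableAt, ?_⟩
  have hK : |K| ≤ Real.exp (2 * μ * M) * Real.exp (μ * c) ^ 3 :=
    (abs_exp_sub_exp_le (by nlinarith)).trans <| le_mul_of_one_le_right (Real.exp_pos _).le <|
      one_le_pow₀ (Real.one_le_exp (by positivity))
  rw [hα''.deriv, hφ, div_pow]
  calc _ ≤ 2 * T ^ 2 * |K| / (t * (T - t)) ^ 3 := abs_second_deriv_div_mul_sub_le K T ht0 htT
    _ ≤ 5 / 2 * T ^ 2 * Real.exp (2 * μ * M) * Real.exp (μ * c) ^ 3 / (t * (T - t)) ^ 3 := by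
        gcongr ?_ / _
        nlinarith [abs_nonneg K, sq_nonneg T, mul_le_mul_of_nonneg_left hK (sq_nonneg T)]
    _ = _ := by ring

/-- The Carleman weight `α(t) = (exp(μ c) − exp(2 μ M))/(t (T − t))` is twice
differentiable on `(0,T)` with `|α″(t)| ≤ (5/2) · T² · exp(2 μ M) · φ(t)³`
(paper's estimate (2.301) with `C = 5/2`). -/
theorem carleman_weight_alpha_second_deriv_bound
    (T μ lam M c : ℝ) (hT : 0 < T) (hμ : 1 ≤ μ) (hlam : 1 ≤ lam)
    (hM : 0 < M) (hc0 : 0 ≤ c) (hcM : c ≤ M)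
    (α φ : ℝ → ℝ)
    (hα : ∀ t, α t = (Real.exp (μ * c) - Real.exp (2 * μ * M)) / (t * (T - t)))
    (hφ : ∀ t, φ t = Real.exp (μ * c) / (t * (T - t))) :
    ∀ t ∈ Set.Ioo (0 : ℝ) T,
      DifferentiableAt ℝ α t ∧ DifferentiableAt ℝ (deriv α) t ∧
        |deriv (deriv α) t| ≤ (5 / 2) * T ^ 2 * Real.exp (2 * μ * M) * (φ t) ^ 3 :=
  carleman_weight_alpha_second_deriv_bound_general T μ M c hμ hc0 hcM α φ hα hφ
end

section
/- Assume in addition λ ≥ T²/4. Then for every t ∈ (0,T) the function t ↦ θ(t)² φ(t) is differentiable at t and |d/dt (θ(t)² φ(t))| ≤ (2 exp(2 μ M) + 1) · λ · T · θ(t)² φ(t)³. (The paper's weight estimate (2.32012)/(2.7) on the time derivative of θ²φ, with explicit constant.) -/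
/-!
Write `P = t (T - t)`, `A = e^{μc} - e^{2μM}` and `B = e^{μc}`, so that `θ²φ = exp (2λA/P) · B/P`.
Its derivative is `-(θ²φ) · P' · (2λA + P) / P²`. Here `|P'| = |T - 2t| ≤ T`, and
`|2λA + P| ≤ (2 e^{2μM} + 1) λ` because `-e^{2μM} ≤ A ≤ 0` and `0 < P ≤ T²/4 ≤ λ`.
Finally `B / P³ ≤ (B / P)³` since `B ≥ 1`.
-/

open Real

lemma hasDerivAt_exp_div_mul_div {g : ℝ → ℝ} {g' t : ℝ} (a b : ℝ) (hg : HasDerivAt g g' t)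
    (ht : g t ≠ 0) :
    HasDerivAt (fun s => exp (a / g s) * (b / g s))
      (exp (a / g t) * (b / g t) * (-(g' * (a + g t)) / g t ^ 2)) t := by
  refine (((hasDerivAt_const t a).fun_div hg ht).exp.fun_mul
    ((hasDerivAt_const t b).fun_div hg ht)).congr_deriv ?_
  simp only [zero_mul, zero_sub]
  field_simp
  ring

lemma hasDerivAt_mul_sub (T t : ℝ) : HasDerivAt (fun s => s * (T - s)) (T - 2 * t) t := by
  refine ((hasDerivAt_id' t).fun_mul
    ((hasDerivAt_const t T).fun_sub (hasDerivAt_id' t))).congr_deriv ?_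
  linarith

lemma abs_sub_two_mul_le {T t : ℝ} (ht0 : 0 ≤ t) (htT : t ≤ T) : |T - 2 * t| ≤ T :=
  abs_le.2 ⟨by linarith, by linarith⟩

lemma mul_sub_le_sq_div_four (T t : ℝ) : t * (T - t) ≤ T ^ 2 / 4 := by
  nlinarith [sq_nonneg (T - 2 * t)]

lemma abs_two_mul_mul_add_le {lam a p K : ℝ} (hlam : 0 ≤ lam) (haK : -K ≤ a) (ha : a ≤ 0)
    (hp0 : 0 ≤ p) (hp : p ≤ lam) : |2 * lam * a + p| ≤ (2 * K + 1) * lam :=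
  abs_le.2 ⟨by nlinarith, by nlinarith⟩

lemma div_pow_le_div_pow_of_one_le {b p : ℝ} {n : ℕ} (hb : 1 ≤ b) (hp : 0 ≤ p) (hn : n ≠ 0) :
    b / p ^ n ≤ (b / p) ^ n := by
  rw [div_pow]
  gcongr
  exact le_self_pow₀ hb hn

lemma abs_mul_div_mul_neg_div_sq_le {E B P d x T K : ℝ} (hE : 0 ≤ E) (hB : 1 ≤ B) (hP : 0 < P)
    (hd : |d| ≤ T) (hx : |x| ≤ K) :
    |E * (B / P) * (-(d * x) / P ^ 2)| ≤ K * T * (E * (B / P) ^ 3) :=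
  calc |E * (B / P) * (-(d * x) / P ^ 2)| = E * (B / P ^ 3) * (|d| * |x|) := by
        simp only [abs_mul, abs_div, abs_neg, abs_pow, abs_of_nonneg hE, abs_of_pos hP,
          abs_of_pos (zero_lt_one.trans_le hB)]
        field_simp
    _ ≤ E * (B / P) ^ 3 * (T * K) := by
        gcongr
        · exact div_pow_le_div_pow_of_one_le hB hP.le three_ne_zero
        · exact (abs_nonneg d).trans hd
    _ = K * T * (E * (B / P) ^ 3) := by ring

theorem carleman_weight_theta_sq_phi_deriv_bound_general
    (T μ lam M c : ℝ) (hμ : 1 ≤ μ)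
    (hc0 : 0 ≤ c) (hcM : c ≤ M)
    (hlamT : T ^ 2 / 4 ≤ lam)
    (α φ θ : ℝ → ℝ)
    (hα : ∀ t, α t = (Real.exp (μ * c) - Real.exp (2 * μ * M)) / (t * (T - t)))
    (hφ : ∀ t, φ t = Real.exp (μ * c) / (t * (T - t)))
    (hθ : ∀ t, θ t = Real.exp (lam * α t)) :
    ∀ t ∈ Set.Ioo (0 : ℝ) T,
      DifferentiableAt ℝ (fun s => θ s ^ 2 * φ s) t ∧
        |deriv (fun s => θ s ^ 2 * φ s) t| ≤
          (2 * Real.exp (2 * μ * M) + 1) * lam * T * (θ t ^ 2 * φ t ^ 3) := by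
  rintro t ⟨ht0, htT⟩
  set A := exp (μ * c) - exp (2 * μ * M)
  set B := exp (μ * c)
  set P := t * (T - t)
  have hP : 0 < P := mul_pos ht0 (sub_pos.2 htT)
  have hθ_sq (s : ℝ) : θ s ^ 2 = exp (2 * lam * A / (s * (T - s))) := by
    rw [hθ, hα, ← exp_nat_mul]
    ring_nf
  have hD := hasDerivAt_exp_div_mul_div (2 * lam * A) B (hasDerivAt_mul_sub T t) hP.ne'
  simp only [hθ_sq, hφ]
  refine ⟨hD.differentiableAt, ?_⟩
  have hlam : 0 ≤ lam := (by positivity : (0 : ℝ) ≤ T ^ 2 / 4).trans hlamT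
  have hA_nonpos : A ≤ 0 := sub_nonpos.2 (exp_le_exp.2 (by nlinarith))
  have hA_ge : -exp (2 * μ * M) ≤ A := by linarith [exp_pos (μ * c)]
  have hPlam : P ≤ lam := (mul_sub_le_sq_div_four T t).trans hlamT
  have hsum := abs_two_mul_mul_add_le hlam hA_ge hA_nonpos hP.le hPlam
  have hB : 1 ≤ B := one_le_exp (by positivity)
  rw [hD.deriv]
  exact abs_mul_div_mul_neg_div_sq_le (exp_pos _).le hB hP
    (abs_sub_two_mul_le ht0.le htT.le) hsum

/-- For `λ ≥ T²/4`, the function `t ↦ θ(t)² φ(t)` is differentiable on `(0,T)` with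
`|(θ²φ)′(t)| ≤ (2 exp(2 μ M) + 1) · λ · T · θ(t)² φ(t)³`
(paper's weight estimate (2.32012)/(2.7), explicit constant). -/
theorem carleman_weight_theta_sq_phi_deriv_bound
    (T μ lam M c : ℝ) (hT : 0 < T) (hμ : 1 ≤ μ) (hlam : 1 ≤ lam)
    (hM : 0 < M) (hc0 : 0 ≤ c) (hcM : c ≤ M)
    (hlamT : T ^ 2 / 4 ≤ lam)
    (α φ θ : ℝ → ℝ)
    (hα : ∀ t, α t = (Real.exp (μ * c) - Real.exp (2 * μ * M)) / (t * (T - t)))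
    (hφ : ∀ t, φ t = Real.exp (μ * c) / (t * (T - t)))
    (hθ : ∀ t, θ t = Real.exp (lam * α t)) :
    ∀ t ∈ Set.Ioo (0 : ℝ) T,
      DifferentiableAt ℝ (fun s => θ s ^ 2 * φ s) t ∧
        |deriv (fun s => θ s ^ 2 * φ s) t| ≤
          (2 * Real.exp (2 * μ * M) + 1) * lam * T * (θ t ^ 2 * φ t ^ 3) :=
  carleman_weight_theta_sq_phi_deriv_bound_general T μ lam M c hμ hc0 hcM hlamT α φ θ hα hφ hθ
end

section
/- Assume in addition λ ≥ T²/8. Then for every t ∈ (0,T) the map y ↦ θ(t,y)² φ(t,y) is differentiable at x and its spatial gradient satisfies ‖∇_y (θ² φ)(t,x)‖ ≤ 4 · λ · μ · L · θ(t,x)² φ(t,x)². (The paper's weight estimate (2.32012)/(2.7) on the spatial gradient of θ²φ, with explicit constant.) -/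
set_option maxHeartbeats 1000000 in
/-- For `λ ≥ T²/8`, the spatial map `y ↦ θ(t,y)² φ(t,y)` is differentiable at `x` with
`‖∇_y(θ²φ)(t,x)‖ ≤ 4 · λ · μ · L · θ(t,x)² φ(t,x)²`
(paper's weight estimate (2.32012)/(2.7), explicit constant). -/
theorem carleman_weight_theta_sq_phi_gradient_bound
    (T μ lam M L : ℝ) (N : ℕ) (hN : 1 ≤ N)
    (x : EuclideanSpace ℝ (Fin N)) (ψ : EuclideanSpace ℝ (Fin N) → ℝ)
    (hT : 0 < T) (hμ : 1 ≤ μ) (hlam : 1 ≤ lam) (hM : 0 < M) (hL : 0 ≤ L)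
    (hψ : ∀ y, 0 ≤ ψ y ∧ ψ y ≤ M)
    (hψdiff : DifferentiableAt ℝ ψ x) (hψL : ‖fderiv ℝ ψ x‖ ≤ L)
    (hlamT : T ^ 2 / 8 ≤ lam)
    (α φ θ : ℝ → EuclideanSpace ℝ (Fin N) → ℝ)
    (hα : ∀ t y, α t y = (Real.exp (μ * ψ y) - Real.exp (2 * μ * M)) / (t * (T - t)))
    (hφ : ∀ t y, φ t y = Real.exp (μ * ψ y) / (t * (T - t)))
    (hθ : ∀ t y, θ t y = Real.exp (lam * α t y)) :
    ∀ t ∈ Set.Ioo (0 : ℝ) T,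
      DifferentiableAt ℝ (fun y => θ t y ^ 2 * φ t y) x ∧
        ‖fderiv ℝ (fun y => θ t y ^ 2 * φ t y) x‖ ≤
          4 * lam * μ * L * (θ t x ^ 2 * φ t x ^ 2) := by
  intro t ht
  obtain ⟨ht0, htT⟩ := ht
  set s : ℝ := t * (T - t) with hsdef
  have hs : 0 < s := mul_pos ht0 (by linarith)
  set c : ℝ := Real.exp (2 * μ * M) with hc
  set A : ℝ → ℝ := fun r => 2 * lam * (Real.exp (μ * r) - c) / s + μ * r with hAdef
  set F : ℝ → ℝ := fun r => Real.exp (A r) / s with hFdef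
  -- derivative of F
  have hAderiv : ∀ r : ℝ, HasDerivAt A (2 * lam * (μ * Real.exp (μ * r)) / s + μ) r := by
    intro r
    have h1 : HasDerivAt (fun r : ℝ => μ * r) μ r := by
      simpa using (hasDerivAt_id r).const_mul μ
    have h2 : HasDerivAt (fun r : ℝ => Real.exp (μ * r)) (μ * Real.exp (μ * r)) r := by
      simpa [mul_comm] using h1.exp
    have h3 : HasDerivAt (fun r : ℝ => 2 * lam * (Real.exp (μ * r) - c) / s)
        (2 * lam * (μ * Real.exp (μ * r)) / s) r := by
      simpa [mul_div_assoc] using ((h2.sub_const c).const_mul (2 * lam)).div_const s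
    exact h3.add h1
  have hFderiv : ∀ r : ℝ,
      HasDerivAt F (Real.exp (A r) * (2 * lam * (μ * Real.exp (μ * r)) / s + μ) / s) r := by
    intro r
    exact ((hAderiv r).exp).div_const s
  -- the function equals F ∘ ψ
  have hfF : (fun y => θ t y ^ 2 * φ t y) = F ∘ ψ := by
    funext y
    simp only [Function.comp, hθ, hα, hφ, hFdef, hAdef]
    rw [sq, ← Real.exp_add, div_eq_mul_inv, div_eq_mul_inv (Real.exp _), ← mul_assoc,
      ← Real.exp_add]
    congr 2
    ring
  set r0 : ℝ := Real.exp (A (ψ x)) * (2 * lam * (μ * Real.exp (μ * ψ x)) / s + μ) / s with hr0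
  have hcomp : HasFDerivAt (fun y => θ t y ^ 2 * φ t y) (r0 • fderiv ℝ ψ x) x := by
    rw [hfF]
    exact (hFderiv (ψ x)).comp_hasFDerivAt x hψdiff.hasFDerivAt
  refine ⟨hcomp.differentiableAt, ?_⟩
  rw [hcomp.fderiv]
  -- abbreviations at the point x
  set P : ℝ := Real.exp (μ * ψ x) with hP
  have hP1 : (1 : ℝ) ≤ P := by
    rw [hP]
    exact Real.one_le_exp (mul_nonneg (by linarith) (hψ x).1)
  have hPpos : (0 : ℝ) < P := lt_of_lt_of_le one_pos hP1
  have hsT : s ≤ T ^ 2 / 4 := by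
    rw [hsdef]; nlinarith [sq_nonneg (t - T / 2)]
  -- θ t x ^ 2 * φ t x = exp (A (ψ x)) / s
  have hkey : θ t x ^ 2 * φ t x = Real.exp (A (ψ x)) / s := congrFun hfF x
  have hφx : φ t x = P / s := by rw [hφ]
  have hφpos : 0 < φ t x := by rw [hφx]; positivity
  have hθpos : 0 < θ t x := by rw [hθ]; exact Real.exp_pos _
  -- key inequality : 1/2 ≤ lam * φ t x
  have hhalf : (1 : ℝ) / 2 ≤ lam * φ t x := by
    rw [hφx, ← mul_div_assoc, le_div_iff₀ hs]
    nlinarith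
  have hEpos : 0 < Real.exp (A (ψ x)) := Real.exp_pos _
  have hr0eq : r0 = (θ t x ^ 2 * φ t x) * (μ * (2 * lam * φ t x + 1)) := by
    rw [hkey, hφx, hr0]
    field_simp
  have hr0nonneg : 0 ≤ r0 := by
    rw [hr0eq]
    have h1 : 0 < 2 * lam * φ t x + 1 := by nlinarith
    positivity
  rw [norm_smul, Real.norm_eq_abs, abs_of_nonneg hr0nonneg]
  calc r0 * ‖fderiv ℝ ψ x‖ ≤ r0 * L := by
        exact mul_le_mul_of_nonneg_left hψL hr0nonneg
    _ ≤ 4 * lam * μ * L * (θ t x ^ 2 * φ t x ^ 2) := by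
        rw [hr0eq]
        have h2 : 2 * lam * φ t x + 1 ≤ 4 * lam * φ t x := by linarith
        have hθφ : 0 ≤ θ t x ^ 2 * φ t x := by positivity
        have hμ0 : 0 ≤ μ := by linarith
        nlinarith [mul_nonneg (mul_nonneg hθφ hμ0) hL, sq_nonneg (θ t x),
          mul_pos hθpos hφpos]
end

section
/- Assume in addition λ ≥ T² and let ε > 0. Then for every t ∈ (0,T) the function t ↦ θ_ε(t)^{−2} φ(t)^{−2} is differentiable at t and |d/dt (θ_ε(t)^{−2} φ(t)^{−2})| ≤ (2 exp(2 μ M) + 1) · λ · T · θ_ε(t)^{−2}. (The paper's weight estimate (B010) on the time derivative of θ_ε^{−2} φ^{−2}, with explicit constant.) -/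
/-!
With `A = exp (μ c)`, `B = exp (2 μ M)`, `p(s) = s (T - s)` and `q(s) = (s + ε)(T - s + ε)`,
the function is `exp (k / q) · (p / A)²` with `k = 2 λ (B - A)`, whose derivative is
`exp (k / q) · (-(k q') / q² · (p / A)² + 2 (p / A)(p' / A))` since `p' = q' = T - 2s`.
As `0 ≤ k ≤ 2 λ B`, `|q'| ≤ T`, `p ≤ q` and `A ≥ 1`, the first summand is at most `2 B λ T`;
as `4 p ≤ T² ≤ λ`, the second is at most `T³ / 2 ≤ λ T`.
-/

open Real

lemma hasDerivAt_add_mul_sub_add (T a t : ℝ) :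
    HasDerivAt (fun s => (s + a) * (T - s + a)) (T - 2 * t) t := by
  have h := ((hasDerivAt_id t).add_const a).mul (((hasDerivAt_id t).const_sub T).add_const a)
  exact h.congr_deriv (by simp only [id_eq]; ring)

lemma four_mul_mul_sub_le_sq (T t : ℝ) : 4 * (t * (T - t)) ≤ T ^ 2 := by
  nlinarith [sq_nonneg (T - 2 * t)]

lemma mul_sub_le_add_mul_sub_add {T t a : ℝ} (ht0 : 0 ≤ t) (htT : t ≤ T) (ha : 0 ≤ a) :
    t * (T - t) ≤ (t + a) * (T - t + a) := by
  nlinarith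

lemma hasDerivAt_exp_div_mul_div_sq {p q : ℝ → ℝ} {p' q' t : ℝ} (k A : ℝ)
    (hp : HasDerivAt p p' t) (hq : HasDerivAt q q' t) (hq0 : q t ≠ 0) :
    HasDerivAt (fun s => exp (k / q s) * (p s / A) ^ 2)
      (exp (k / q t) * (-(k * q') / q t ^ 2 * (p t / A) ^ 2 + 2 * (p t / A) * (p' / A))) t := by
  have hexp := ((hasDerivAt_const t k).div hq hq0).exp
  have hsq := (hp.div_const A).pow 2
  exact (hexp.mul hsq).congr_deriv <| by
    simp only [Pi.div_apply, Pi.pow_apply, Nat.cast_ofNat]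
    ring

lemma abs_neg_mul_div_sq_mul_div_sq_le {k D p q A : ℝ} (hp : 0 ≤ p) (hpq : p ≤ q)
    (hA : 1 ≤ A) :
    |-(k * D) / q ^ 2 * (p / A) ^ 2| ≤ |k| * |D| := by
  have hpA : (p / A) ^ 2 ≤ q ^ 2 :=
    pow_le_pow_left₀ (by positivity) ((div_le_self hp hA).trans hpq) 2
  have hratio : (p / A) ^ 2 / q ^ 2 ≤ 1 := div_le_one_of_le₀ hpA (sq_nonneg q)
  calc |-(k * D) / q ^ 2 * (p / A) ^ 2| = |k| * |D| * ((p / A) ^ 2 / q ^ 2) := by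
        rw [abs_mul, abs_div, abs_neg, abs_mul, abs_of_nonneg (sq_nonneg (p / A)),
          abs_of_nonneg (sq_nonneg q)]
        ring
    _ ≤ |k| * |D| * 1 := by gcongr
    _ = |k| * |D| := mul_one _

lemma abs_two_mul_div_mul_div_le {p D A : ℝ} (hp : 0 ≤ p) (hA : 1 ≤ A) :
    |2 * (p / A) * (D / A)| ≤ 2 * p * |D| := by
  have hA0 : 0 < A := by linarith
  calc |2 * (p / A) * (D / A)| = 2 * p * |D| / A ^ 2 := by
        rw [abs_mul, abs_mul, abs_div, abs_div, abs_of_pos hA0, abs_of_nonneg hp, abs_two]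
        ring
    _ ≤ 2 * p * |D| := div_le_self (by positivity) (one_le_pow₀ hA)

lemma abs_weight_deriv_factor_le {k B lam T p q D A : ℝ} (hk : |k| ≤ 2 * B * lam)
    (hD : |D| ≤ T) (hp : 0 ≤ p) (hpq : p ≤ q) (hpT : 4 * p ≤ T ^ 2) (hlamT : T ^ 2 ≤ lam)
    (hA : 1 ≤ A) :
    |-(k * D) / q ^ 2 * (p / A) ^ 2 + 2 * (p / A) * (D / A)| ≤ (2 * B + 1) * lam * T := by
  have hfirst := abs_neg_mul_div_sq_mul_div_sq_le (k := k) (D := D) hp hpq hA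
  have hsecond := abs_two_mul_div_mul_div_le (D := D) hp hA
  calc _ ≤ |k| * |D| + 2 * p * |D| := (abs_add_le _ _).trans (add_le_add hfirst hsecond)
    _ ≤ 2 * B * lam * T + lam * T :=
        add_le_add (mul_le_mul hk hD (abs_nonneg D) ((abs_nonneg k).trans hk))
          (by nlinarith [abs_nonneg D])
    _ = (2 * B + 1) * lam * T := by ring

theorem carleman_regularized_weight_deriv_bound_general
    (T μ lam M c : ℝ) (hμ : 1 ≤ μ)
    (hc0 : 0 ≤ c) (hcM : c ≤ M)
    (hlamT : T ^ 2 ≤ lam)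
    (φ : ℝ → ℝ) (αε θε : ℝ → ℝ → ℝ)
    (hφ : ∀ t, φ t = Real.exp (μ * c) / (t * (T - t)))
    (hαε : ∀ ε t, αε ε t = (Real.exp (μ * c) - Real.exp (2 * μ * M)) / ((t + ε) * (T - t + ε)))
    (hθε : ∀ ε t, θε ε t = Real.exp (lam * αε ε t)) :
    ∀ ε > (0 : ℝ), ∀ t ∈ Set.Ioo (0 : ℝ) T,
      DifferentiableAt ℝ (fun s => (θε ε s ^ 2)⁻¹ * (φ s ^ 2)⁻¹) t ∧
        |deriv (fun s => (θε ε s ^ 2)⁻¹ * (φ s ^ 2)⁻¹) t| ≤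
          (2 * Real.exp (2 * μ * M) + 1) * lam * T * (θε ε t ^ 2)⁻¹ := by
  intro ε hε t ⟨ht0, htT⟩
  set A := exp (μ * c)
  set B := exp (2 * μ * M)
  set k := 2 * lam * (B - A)
  have hA : 1 ≤ A := one_le_exp (by positivity)
  have hAB : A ≤ B := exp_le_exp.mpr (by nlinarith)
  have hlam : 0 ≤ lam := (sq_nonneg T).trans hlamT
  have hθ : ∀ s, (θε ε s ^ 2)⁻¹ = exp (k / ((s + ε) * (T - s + ε))) := fun s => by
    rw [hθε, hαε, ← exp_nat_mul, ← exp_neg]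
    congr 1
    ring
  have hfun : (fun s => (θε ε s ^ 2)⁻¹ * (φ s ^ 2)⁻¹)
      = fun s => exp (k / ((s + ε) * (T - s + ε))) * (s * (T - s) / A) ^ 2 := by
    funext s
    rw [hθ, hφ, ← inv_pow, inv_div]
  have hp : HasDerivAt (fun s => s * (T - s)) (T - 2 * t) t := by
    simpa using hasDerivAt_add_mul_sub_add T 0 t
  have hderiv := hasDerivAt_exp_div_mul_div_sq k A hp (hasDerivAt_add_mul_sub_add T ε t)
    (by positivity)
  refine ⟨hfun ▸ hderiv.differentiableAt, ?_⟩
  have hk : |k| ≤ 2 * B * lam := by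
    rw [abs_of_nonneg (by positivity)]
    nlinarith [exp_pos (μ * c)]
  rw [hfun, hderiv.deriv, hθ, abs_mul, abs_of_pos (exp_pos _), mul_comm]
  gcongr
  exact abs_weight_deriv_factor_le hk (abs_sub_two_mul_le ht0.le htT.le) (by positivity)
    (mul_sub_le_add_mul_sub_add ht0.le htT.le hε.le) (four_mul_mul_sub_le_sq T t) hlamT hA

/-- For `λ ≥ T²` and `ε > 0`, the function `t ↦ θ_ε(t)⁻² φ(t)⁻²` is differentiable on
`(0,T)` with `|(θ_ε⁻²φ⁻²)′(t)| ≤ (2 exp(2 μ M) + 1) · λ · T · θ_ε(t)⁻²`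
(paper's weight estimate (B010), explicit constant). -/
theorem carleman_regularized_weight_deriv_bound
    (T μ lam M c : ℝ) (hT : 0 < T) (hμ : 1 ≤ μ) (hlam : 1 ≤ lam)
    (hM : 0 < M) (hc0 : 0 ≤ c) (hcM : c ≤ M)
    (hlamT : T ^ 2 ≤ lam)
    (φ : ℝ → ℝ) (αε θε : ℝ → ℝ → ℝ)
    (hφ : ∀ t, φ t = Real.exp (μ * c) / (t * (T - t)))
    (hαε : ∀ ε t, αε ε t = (Real.exp (μ * c) - Real.exp (2 * μ * M)) / ((t + ε) * (T - t + ε)))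
    (hθε : ∀ ε t, θε ε t = Real.exp (lam * αε ε t)) :
    ∀ ε > (0 : ℝ), ∀ t ∈ Set.Ioo (0 : ℝ) T,
      DifferentiableAt ℝ (fun s => (θε ε s ^ 2)⁻¹ * (φ s ^ 2)⁻¹) t ∧
        |deriv (fun s => (θε ε s ^ 2)⁻¹ * (φ s ^ 2)⁻¹) t| ≤
          (2 * Real.exp (2 * μ * M) + 1) * lam * T * (θε ε t ^ 2)⁻¹ :=
  carleman_regularized_weight_deriv_bound_general T μ lam M c hμ hc0 hcM hlamT φ αε θε hφ hαε hθε
end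

section
/- Assume in addition λ ≥ T²/4 and let ε > 0. Then for every t ∈ (0,T) the map y ↦ θ_ε(t,y)^{−2} φ(t,y)^{−2} is differentiable at x and its spatial gradient satisfies ‖∇_y (θ_ε^{−2} φ^{−2})(t,x)‖ ≤ 4 · λ · μ · L · θ_ε(t,x)^{−2} φ(t,x)^{−1}. (The paper's weight estimate (B010) on the spatial gradient of θ_ε^{−2} φ^{−2}, with explicit constant.) -/
/-!
Writing `A = exp (μ ψ)` and `p = t (T - t)`, the weight `θ_ε⁻² φ⁻²` is the function
`r ↦ p² exp (-2λ (e^{μr} - e^{2μM}) / s - 2μr)` of `r = ψ y`, whose derivative is itself times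
`-2μ (λ e^{μr} / s + 1)`. Against the target `θ_ε⁻² p / A` this leaves the factor
`p λ / s + p / A`, which is at most `2λ` because `p ≤ s = (t + ε)(T - t + ε)`, `A ≥ 1` and
`p ≤ T² / 4 ≤ λ`.
-/

open Real

theorem HasDerivAt.norm_fderiv_comp_le {E : Type*} [NormedAddCommGroup E] [NormedSpace ℝ E]
    {g : ℝ → ℝ} {g' C L : ℝ} {ψ : E → ℝ} {x : E} (hg : HasDerivAt g g' (ψ x))
    (hψ : DifferentiableAt ℝ ψ x) (hg' : |g'| ≤ C) (hψL : ‖fderiv ℝ ψ x‖ ≤ L) :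
    ‖fderiv ℝ (g ∘ ψ) x‖ ≤ C * L := by
  rw [(hg.comp_hasFDerivAt x hψ.hasFDerivAt).fderiv, norm_smul, Real.norm_eq_abs]
  exact mul_le_mul hg' hψL (norm_nonneg _) ((abs_nonneg _).trans hg')

namespace CarlemanWeight

/-- The weight `θ_ε⁻² φ⁻²` as a function of `r = ψ y`, with `K = exp (2μM)`,
`s = (t + ε)(T - t + ε)` and `p = t (T - t)`. -/
noncomputable def profile (μ lam K s p r : ℝ) : ℝ :=
  p ^ 2 * exp (-2 * lam * ((exp (μ * r) - K) / s) - 2 * μ * r)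

variable {μ lam K s p : ℝ}

theorem inv_sq_mul_inv_sq_eq_profile (r : ℝ) :
    (exp (lam * ((exp (μ * r) - K) / s)) ^ 2)⁻¹ * ((exp (μ * r) / p) ^ 2)⁻¹ =
      profile μ lam K s p r := by
  rw [profile, show -2 * lam * ((exp (μ * r) - K) / s) - 2 * μ * r =
      -((2 : ℕ) * (lam * ((exp (μ * r) - K) / s))) + -((2 : ℕ) * (μ * r)) by push_cast; ring,
    exp_add, exp_neg, exp_neg, exp_nat_mul, exp_nat_mul, div_pow, inv_div]
  ring

theorem hasDerivAt_profile (r : ℝ) :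
    HasDerivAt (profile μ lam K s p)
      (profile μ lam K s p r * (-2 * lam * (exp (μ * r) * μ / s) - 2 * μ)) r := by
  have hlin : HasDerivAt (fun r : ℝ => μ * r) μ r := by
    simpa using (hasDerivAt_id r).const_mul μ
  have hexponent : HasDerivAt (fun y => -2 * lam * ((exp (μ * y) - K) / s) - 2 * μ * y)
      (-2 * lam * (exp (μ * r) * μ / s) - 2 * μ) r := by
    have := (((hlin.exp.sub_const K).div_const s).const_mul (-2 * lam)).fun_sub
      (hlin.const_mul 2)
    simpa only [mul_assoc] using this
  unfold profile
  rw [mul_assoc]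
  exact hexponent.exp.const_mul (p ^ 2)

theorem abs_deriv_profile_le {r : ℝ} (hμ : 0 ≤ μ) (hr : 0 ≤ r) (hp : 0 < p) (hps : p ≤ s)
    (hplam : p ≤ lam) :
    |profile μ lam K s p r * (-2 * lam * (exp (μ * r) * μ / s) - 2 * μ)| ≤
      4 * lam * μ * ((exp (lam * ((exp (μ * r) - K) / s)) ^ 2)⁻¹ * (exp (μ * r) / p)⁻¹) := by
  rw [← inv_sq_mul_inv_sq_eq_profile]
  set A := exp (μ * r)
  set a := exp (lam * ((A - K) / s))
  have hA : 1 ≤ A := one_le_exp (mul_nonneg hμ hr)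
  have hs : 0 < s := hp.trans_le hps
  have hlam : 0 ≤ lam := hp.le.trans hplam
  have hfactor : p / A * (lam * A / s + 1) ≤ 2 * lam := by
    have hps' : p / s ≤ 1 := (div_le_one hs).mpr hps
    have hpA : p / A ≤ p := div_le_self hp.le hA
    calc p / A * (lam * A / s + 1) = lam * (p / s) + p / A := by
          field_simp
      _ ≤ lam * 1 + lam := by gcongr; linarith
      _ = 2 * lam := by ring
  have hnonneg : 0 ≤ 2 * μ * (a ^ 2)⁻¹ * (p / A) := by positivity
  have hderiv : -2 * lam * (A * μ / s) - 2 * μ ≤ 0 := by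
    have : 0 ≤ lam * (A * μ / s) := by positivity
    linarith
  calc _ = 2 * μ * (a ^ 2)⁻¹ * (p / A) * (p / A * (lam * A / s + 1)) := by
        rw [abs_mul, abs_of_nonneg (by positivity), abs_of_nonpos hderiv]
        field_simp
        ring
    _ ≤ 2 * μ * (a ^ 2)⁻¹ * (p / A) * (2 * lam) := mul_le_mul_of_nonneg_left hfactor hnonneg
    _ = _ := by rw [inv_div]; ring

end CarlemanWeight

open CarlemanWeight in
theorem carleman_regularized_weight_gradient_bound_general
    (T μ lam M L : ℝ) (N : ℕ)
    (x : EuclideanSpace ℝ (Fin N)) (ψ : EuclideanSpace ℝ (Fin N) → ℝ)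
    (hμ : 1 ≤ μ)
    (hψ : ∀ y, 0 ≤ ψ y ∧ ψ y ≤ M)
    (hψdiff : DifferentiableAt ℝ ψ x) (hψL : ‖fderiv ℝ ψ x‖ ≤ L)
    (hlamT : T ^ 2 / 4 ≤ lam)
    (φ : ℝ → EuclideanSpace ℝ (Fin N) → ℝ)
    (αε θε : ℝ → ℝ → EuclideanSpace ℝ (Fin N) → ℝ)
    (hφ : ∀ t y, φ t y = Real.exp (μ * ψ y) / (t * (T - t)))
    (hαε : ∀ ε t y, αε ε t y =
      (Real.exp (μ * ψ y) - Real.exp (2 * μ * M)) / ((t + ε) * (T - t + ε)))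
    (hθε : ∀ ε t y, θε ε t y = Real.exp (lam * αε ε t y)) :
    ∀ ε > (0 : ℝ), ∀ t ∈ Set.Ioo (0 : ℝ) T,
      DifferentiableAt ℝ (fun y => (θε ε t y ^ 2)⁻¹ * (φ t y ^ 2)⁻¹) x ∧
        ‖fderiv ℝ (fun y => (θε ε t y ^ 2)⁻¹ * (φ t y ^ 2)⁻¹) x‖ ≤
          4 * lam * μ * L * ((θε ε t x ^ 2)⁻¹ * (φ t x)⁻¹) := by
  rintro ε hε t ⟨ht0, htT⟩
  have hp : 0 < t * (T - t) := mul_pos ht0 (by linarith)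
  have hps : t * (T - t) ≤ (t + ε) * (T - t + ε) := by gcongr <;> linarith
  have hplam : t * (T - t) ≤ lam := by nlinarith [sq_nonneg (T - 2 * t)]
  set g := profile μ lam (exp (2 * μ * M)) ((t + ε) * (T - t + ε)) (t * (T - t))
  have hfun : (fun y => (θε ε t y ^ 2)⁻¹ * (φ t y ^ 2)⁻¹) = g ∘ ψ := by
    funext y
    simp only [hθε, hαε, hφ, Function.comp_apply, g, inv_sq_mul_inv_sq_eq_profile]
  have hg := hasDerivAt_profile (μ := μ) (lam := lam) (K := exp (2 * μ * M))
    (s := (t + ε) * (T - t + ε)) (p := t * (T - t)) (ψ x)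
  rw [hfun]
  refine ⟨hg.differentiableAt.comp x hψdiff, ?_⟩
  calc _ ≤ _ := hg.norm_fderiv_comp_le hψdiff
          (abs_deriv_profile_le (by linarith) (hψ x).1 hp hps hplam) hψL
    _ = _ := by simp only [hθε, hαε, hφ]; ring

/-- For `λ ≥ T²/4` and `ε > 0`, the spatial map `y ↦ θ_ε(t,y)⁻² φ(t,y)⁻²` is
differentiable at `x` with
`‖∇_y(θ_ε⁻²φ⁻²)(t,x)‖ ≤ 4 · λ · μ · L · θ_ε(t,x)⁻² φ(t,x)⁻¹`
(paper's weight estimate (B010), explicit constant). -/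
theorem carleman_regularized_weight_gradient_bound
    (T μ lam M L : ℝ) (N : ℕ) (hN : 1 ≤ N)
    (x : EuclideanSpace ℝ (Fin N)) (ψ : EuclideanSpace ℝ (Fin N) → ℝ)
    (hT : 0 < T) (hμ : 1 ≤ μ) (hlam : 1 ≤ lam) (hM : 0 < M) (hL : 0 ≤ L)
    (hψ : ∀ y, 0 ≤ ψ y ∧ ψ y ≤ M)
    (hψdiff : DifferentiableAt ℝ ψ x) (hψL : ‖fderiv ℝ ψ x‖ ≤ L)
    (hlamT : T ^ 2 / 4 ≤ lam)
    (φ : ℝ → EuclideanSpace ℝ (Fin N) → ℝ)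
    (αε θε : ℝ → ℝ → EuclideanSpace ℝ (Fin N) → ℝ)
    (hφ : ∀ t y, φ t y = Real.exp (μ * ψ y) / (t * (T - t)))
    (hαε : ∀ ε t y, αε ε t y =
      (Real.exp (μ * ψ y) - Real.exp (2 * μ * M)) / ((t + ε) * (T - t + ε)))
    (hθε : ∀ ε t y, θε ε t y = Real.exp (lam * αε ε t y)) :
    ∀ ε > (0 : ℝ), ∀ t ∈ Set.Ioo (0 : ℝ) T,
      DifferentiableAt ℝ (fun y => (θε ε t y ^ 2)⁻¹ * (φ t y ^ 2)⁻¹) x ∧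
        ‖fderiv ℝ (fun y => (θε ε t y ^ 2)⁻¹ * (φ t y ^ 2)⁻¹) x‖ ≤
          4 * lam * μ * L * ((θε ε t x ^ 2)⁻¹ * (φ t x)⁻¹) :=
  carleman_regularized_weight_gradient_bound_general T μ lam M L N x ψ hμ hψ hψdiff hψL hlamT φ αε
    θε hφ hαε hθε
end

section
/- Assume in addition λ · (exp(2 μ M) − exp(μ c)) ≥ T². Then the function t ↦ θ(t)² φ(t)³ is monotone nondecreasing on the interval (0, T/2] and monotone nonincreasing on the interval [T/2, T). (Monotonicity of the weight θ²φ³ used in the optimization argument of the paper's Theorems 4.1 and 4.2.) -/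
/-- Key monotonicity: `s ↦ exp(-(2K)/s)/s^3` is nondecreasing for `0 < s` with `4 s ≤ K`. -/
lemma carleman_key_aux (K s s' : ℝ) (hs : 0 < s) (hss' : s ≤ s') (hb : 4 * s' ≤ K) :
    Real.exp (-(2 * K) / s) / s ^ 3 ≤ Real.exp (-(2 * K) / s') / s' ^ 3 := by
  have hs' : 0 < s' := hs.trans_le hss'
  have h1 : Real.log s' - Real.log s ≤ (s' - s) / s := by
    have h := Real.log_le_sub_one_of_pos (div_pos hs' hs)
    rw [Real.log_div hs'.ne' hs.ne'] at h
    have : s' / s - 1 = (s' - s) / s := by field_simp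
    linarith [this ▸ h]
  have h2 : 3 * ((s' - s) / s) ≤ 2 * K / s - 2 * K / s' := by
    have e1 : 3 * ((s' - s) / s) = (3 * (s' - s) * s') / (s * s') := by
      field_simp
    have e2 : 2 * K / s - 2 * K / s' = (2 * K * (s' - s)) / (s * s') := by
      field_simp
    rw [e1, e2, div_le_div_iff₀ (by positivity) (by positivity)]
    nlinarith [mul_nonneg (mul_nonneg (sub_nonneg.mpr hss') (mul_pos hs hs').le)
      (by linarith : (0:ℝ) ≤ 2 * K - 3 * s')]
  have hexp : Real.exp (-(2 * K) / s + 3 * Real.log s') ≤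
      Real.exp (-(2 * K) / s' + 3 * Real.log s) := by
    apply Real.exp_le_exp.mpr
    have : -(2 * K) / s = -(2 * K / s) := by ring
    have : -(2 * K) / s' = -(2 * K / s') := by ring
    nlinarith [h1, h2]
  have hls : Real.exp (3 * Real.log s) = s ^ 3 := by
    rw [show (3 : ℝ) * Real.log s = Real.log s + Real.log s + Real.log s by ring,
      Real.exp_add, Real.exp_add, Real.exp_log hs]; ring
  have hls' : Real.exp (3 * Real.log s') = s' ^ 3 := by
    rw [show (3 : ℝ) * Real.log s' = Real.log s' + Real.log s' + Real.log s' by ring,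
      Real.exp_add, Real.exp_add, Real.exp_log hs']; ring
  rw [Real.exp_add, Real.exp_add, hls, hls'] at hexp
  rw [div_le_div_iff₀ (by positivity) (by positivity)]
  linarith [hexp]

/-- If `λ (exp(2 μ M) − exp(μ c)) ≥ T²`, then `t ↦ θ(t)² φ(t)³` is nondecreasing on
`(0, T/2]` and nonincreasing on `[T/2, T)` (monotonicity used in the optimization
argument of the paper's Theorems 4.1 and 4.2). -/
theorem carleman_weight_theta_sq_phi_cubed_monotone
    (T μ lam M c : ℝ) (hT : 0 < T) (hμ : 1 ≤ μ) (hlam : 1 ≤ lam)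
    (hM : 0 < M) (hc0 : 0 ≤ c) (hcM : c ≤ M)
    (hlamT : T ^ 2 ≤ lam * (Real.exp (2 * μ * M) - Real.exp (μ * c)))
    (α φ θ : ℝ → ℝ)
    (hα : ∀ t, α t = (Real.exp (μ * c) - Real.exp (2 * μ * M)) / (t * (T - t)))
    (hφ : ∀ t, φ t = Real.exp (μ * c) / (t * (T - t)))
    (hθ : ∀ t, θ t = Real.exp (lam * α t)) :
    MonotoneOn (fun t => θ t ^ 2 * φ t ^ 3) (Set.Ioc 0 (T / 2)) ∧
      AntitoneOn (fun t => θ t ^ 2 * φ t ^ 3) (Set.Ico (T / 2) T) := by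
  set K : ℝ := lam * (Real.exp (2 * μ * M) - Real.exp (μ * c)) with hK
  have hrw : ∀ t, 0 < t → t < T →
      θ t ^ 2 * φ t ^ 3 =
        Real.exp (μ * c) ^ 3 *
          (Real.exp (-(2 * K) / (t * (T - t))) / (t * (T - t)) ^ 3) := by
    intro t ht1 ht2
    have hst : 0 < t * (T - t) := mul_pos ht1 (by linarith)
    rw [hθ, hφ, hα, ← Real.exp_nat_mul, div_pow]
    have harg : (2 : ℕ) * (lam * ((Real.exp (μ * c) - Real.exp (2 * μ * M)) /
        (t * (T - t)))) = -(2 * K) / (t * (T - t)) := by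
      rw [hK]; push_cast; ring
    rw [harg]; ring
  constructor
  · intro t ht t' ht' htt'
    have ht1 : 0 < t := ht.1
    have ht2 : t < T := by have := ht.2; linarith
    have ht1' : 0 < t' := ht'.1
    have ht2' : t' < T := by have := ht'.2; linarith
    simp only
    rw [hrw t ht1 ht2, hrw t' ht1' ht2']
    apply mul_le_mul_of_nonneg_left _ (by positivity)
    apply carleman_key_aux
    · exact mul_pos ht1 (by linarith)
    · nlinarith [ht.2, ht'.2]
    · nlinarith [ht'.1, ht'.2]
  · intro t ht t' ht' htt'
    have ht1 : 0 < t := lt_of_lt_of_le (by linarith) ht.1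
    have ht2 : t < T := ht.2
    have ht1' : 0 < t' := lt_of_lt_of_le (by linarith) ht'.1
    have ht2' : t' < T := ht'.2
    simp only
    rw [hrw t ht1 ht2, hrw t' ht1' ht2']
    apply mul_le_mul_of_nonneg_left _ (by positivity)
    apply carleman_key_aux
    · exact mul_pos ht1' (by linarith)
    · nlinarith [ht.1, ht'.1]
    · nlinarith [ht.1, ht.2]
end

section
/- Assume in addition λ · (exp(2 μ M) − exp(μ c)) ≥ T². Then for every t ∈ (0,T) one has θ(t)² φ(t)³ ≤ θ(T/2)² φ(T/2)³; that is, the function t ↦ θ(t)² φ(t)³ attains its maximum over (0,T) at t = T/2. (The maximization claim used in the proofs of the paper's observability inequalities, Theorems 4.1 and 4.2.) -/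
lemma carleman_aux (a s1 s2 : ℝ) (h1 : 0 < s1) (h12 : s1 ≤ s2) (ha : 3 * s2 ≤ a) :
    Real.exp (-(a / s1)) / s1 ^ 3 ≤ Real.exp (-(a / s2)) / s2 ^ 3 := by
  have h2 : 0 < s2 := h1.trans_le h12
  rw [div_le_div_iff₀ (by positivity) (by positivity)]
  have hr : s2 ≤ Real.exp (s2 / s1 - 1) * s1 := by
    have h := Real.add_one_le_exp (s2 / s1 - 1)
    have : s2 / s1 ≤ Real.exp (s2 / s1 - 1) := by linarith
    calc s2 = s2 / s1 * s1 := by field_simp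
    _ ≤ Real.exp (s2 / s1 - 1) * s1 := by gcongr
  have key : -(a / s1) + 3 * (s2 / s1 - 1) ≤ -(a / s2) := by
    rw [← sub_nonneg]
    have h : -(a / s2) - (-(a / s1) + 3 * (s2 / s1 - 1))
        = (a - 3 * s2) * (s2 - s1) / (s1 * s2) := by
      field_simp
      ring
    rw [h]
    exact div_nonneg (mul_nonneg (by linarith) (by linarith)) (by positivity)
  calc Real.exp (-(a / s1)) * s2 ^ 3
      ≤ Real.exp (-(a / s1)) * (Real.exp (s2 / s1 - 1) * s1) ^ 3 := by
        gcongr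
    _ = Real.exp (-(a / s1) + 3 * (s2 / s1 - 1)) * s1 ^ 3 := by
        have h3 : Real.exp (s2 / s1 - 1) ^ 3 = Real.exp (3 * (s2 / s1 - 1)) := by
          rw [← Real.exp_nat_mul]; norm_num
        rw [mul_pow, ← mul_assoc, h3, ← Real.exp_add]
    _ ≤ Real.exp (-(a / s2)) * s1 ^ 3 := by
        gcongr

/-- If `λ (exp(2 μ M) − exp(μ c)) ≥ T²`, then `t ↦ θ(t)² φ(t)³` attains its maximum
over `(0,T)` at `t = T/2` (maximization claim in the proofs of the paper's
observability inequalities, Theorems 4.1 and 4.2). -/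
theorem carleman_weight_max_at_midpoint
    (T μ lam M c : ℝ) (hT : 0 < T) (hμ : 1 ≤ μ) (hlam : 1 ≤ lam)
    (hM : 0 < M) (hc0 : 0 ≤ c) (hcM : c ≤ M)
    (hlamT : T ^ 2 ≤ lam * (Real.exp (2 * μ * M) - Real.exp (μ * c)))
    (α φ θ : ℝ → ℝ)
    (hα : ∀ t, α t = (Real.exp (μ * c) - Real.exp (2 * μ * M)) / (t * (T - t)))
    (hφ : ∀ t, φ t = Real.exp (μ * c) / (t * (T - t)))
    (hθ : ∀ t, θ t = Real.exp (lam * α t)) :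
    ∀ t ∈ Set.Ioo (0 : ℝ) T,
      θ t ^ 2 * φ t ^ 3 ≤ θ (T / 2) ^ 2 * φ (T / 2) ^ 3 := by
  intro t ht
  obtain ⟨ht0, htT⟩ := ht
  set E := Real.exp (μ * c) with hE
  set e2 := Real.exp (2 * μ * M) with he2
  have hEpos : 0 < E := Real.exp_pos _
  have hK : 0 < e2 - E := by
    have : μ * c < 2 * μ * M := by nlinarith
    have := Real.exp_lt_exp.mpr this
    linarith
  set a := 2 * lam * (e2 - E) with ha
  -- rewrite formula
  have form : ∀ s : ℝ, s ≠ 0 →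
      Real.exp (lam * ((E - e2) / s)) ^ 2 * (E / s) ^ 3
        = E ^ 3 * (Real.exp (-(a / s)) / s ^ 3) := by
    intro s hs
    have h1 : Real.exp (lam * ((E - e2) / s)) ^ 2 = Real.exp (-(a / s)) := by
      rw [sq, ← Real.exp_add]
      congr 1
      field_simp
      ring
    rw [h1, div_pow]
    ring
  have hs1 : 0 < t * (T - t) := mul_pos ht0 (by linarith)
  have hs2 : T / 2 * (T - T / 2) = T ^ 2 / 4 := by ring
  have h12 : t * (T - t) ≤ T ^ 2 / 4 := by nlinarith [sq_nonneg (T - 2 * t)]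
  have ha3 : 3 * (T ^ 2 / 4) ≤ a := by
    have hlamK : 0 ≤ lam * (e2 - E) := by positivity
    nlinarith
  rw [hθ, hθ, hα, hα, hφ, hφ, form _ (ne_of_gt hs1), hs2,
    form _ (by positivity)]
  gcongr E ^ 3 * ?_
  exact carleman_aux a _ _ hs1 h12 ha3
end

section
/- Assume in addition λ · (exp(2 μ M) − exp(μ c)) ≥ T². Then for every t ∈ (0,T) one has θ(t)² φ(t)³ ≤ 64 · exp(3 μ M) / T⁶. (Uniform upper bound on the weight θ²φ³ over the whole time interval, used to pass from the weighted Carleman estimate to the unweighted observability inequality with constant of the form exp(C λ T^{−2}).) -/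
/-- If `λ (exp(2 μ M) − exp(μ c)) ≥ T²`, then `θ(t)² φ(t)³ ≤ 64 exp(3 μ M)/T⁶` for all
`t ∈ (0,T)` (uniform upper bound on the Carleman weight used to pass to the
unweighted observability inequality). -/
theorem carleman_weight_uniform_upper_bound
    (T μ lam M c : ℝ) (hT : 0 < T) (hμ : 1 ≤ μ) (hlam : 1 ≤ lam)
    (hM : 0 < M) (hc0 : 0 ≤ c) (hcM : c ≤ M)
    (hlamT : T ^ 2 ≤ lam * (Real.exp (2 * μ * M) - Real.exp (μ * c)))
    (α φ θ : ℝ → ℝ)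
    (hα : ∀ t, α t = (Real.exp (μ * c) - Real.exp (2 * μ * M)) / (t * (T - t)))
    (hφ : ∀ t, φ t = Real.exp (μ * c) / (t * (T - t)))
    (hθ : ∀ t, θ t = Real.exp (lam * α t)) :
    ∀ t ∈ Set.Ioo (0 : ℝ) T,
      θ t ^ 2 * φ t ^ 3 ≤ 64 * Real.exp (3 * μ * M) / T ^ 6 := by
  intro t ht
  obtain ⟨ht0, htT⟩ := ht
  have hs : 0 < t * (T - t) := mul_pos ht0 (by linarith)
  set s := t * (T - t) with hsdef
  set K := lam * (Real.exp (2 * μ * M) - Real.exp (μ * c)) with hKdef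
  have hKT : T ^ 2 ≤ K := hlamT
  have hKpos : 0 < K := lt_of_lt_of_le (by positivity) hKT
  rw [hθ, hα, hφ]
  have e1 : Real.exp (lam * ((Real.exp (μ * c) - Real.exp (2 * μ * M)) / s)) ^ 2
      = Real.exp (-(2 * K) / s) := by
    rw [sq, ← Real.exp_add]
    congr 1
    rw [hKdef]
    field_simp
    ring
  rw [e1, div_pow]
  -- bound exp factor
  have h2 : Real.exp (-(2 * K) / s) ≤ Real.exp (-(2 * T ^ 2) / s) := by
    apply Real.exp_le_exp.2
    exact div_le_div_of_nonneg_right (by linarith) hs.le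
  have h3 : Real.exp (μ * c) ^ 3 ≤ Real.exp (3 * μ * M) := by
    rw [← Real.exp_nat_mul]
    apply Real.exp_le_exp.2
    push_cast
    nlinarith
  -- key: T^6 ≤ 64 * s^3 * exp (2*T^2/s)
  have key : T ^ 6 ≤ 64 * s ^ 3 * Real.exp (2 * T ^ 2 / s) := by
    have ha : (0:ℝ) ≤ 2 * T ^ 2 / (3 * s) := by positivity
    have h4 : 2 * T ^ 2 / (3 * s) ≤ Real.exp (2 * T ^ 2 / (3 * s)) :=
      le_trans (by linarith) (Real.add_one_le_exp _)
    have h5 : (2 * T ^ 2 / (3 * s)) ^ 3 ≤ Real.exp (2 * T ^ 2 / (3 * s)) ^ 3 :=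
      pow_le_pow_left₀ ha h4 3
    have h6 : Real.exp (2 * T ^ 2 / (3 * s)) ^ 3 = Real.exp (2 * T ^ 2 / s) := by
      rw [← Real.exp_nat_mul]
      congr 1
      push_cast
      field_simp
    rw [h6] at h5
    have h7 : (2 * T ^ 2 / (3 * s)) ^ 3 = 8 * T ^ 6 / (27 * s ^ 3) := by
      field_simp; ring
    rw [h7] at h5
    have hep : 0 < Real.exp (2 * T ^ 2 / s) := Real.exp_pos _
    rw [div_le_iff₀ (by positivity)] at h5
    nlinarith [pow_pos hs 3]
  have hexp_pos : (0:ℝ) < Real.exp (-(2 * T ^ 2) / s) := Real.exp_pos _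
  calc Real.exp (-(2 * K) / s) * (Real.exp (μ * c) ^ 3 / s ^ 3)
      ≤ Real.exp (-(2 * T ^ 2) / s) * (Real.exp (3 * μ * M) / s ^ 3) := by
        apply mul_le_mul h2 (by gcongr) (by positivity) (le_of_lt hexp_pos)
    _ ≤ 64 * Real.exp (3 * μ * M) / T ^ 6 := by
        have hE := Real.exp_pos (3 * μ * M)
        have hu := Real.exp_pos (2 * T ^ 2 / s)
        rw [show -(2 * T ^ 2) / s = -(2 * T ^ 2 / s) by ring, Real.exp_neg,
          inv_mul_eq_div, div_div, div_le_div_iff₀ (by positivity) (by positivity)]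
        nlinarith [key, hE, hu]
end
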